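/- Let C and D be operads in sets and suppose D(n) acts on C(m) via maps ρ_i : D(n) × C(m) → C(m) for 1 ≤ i ≤ n such that (i) the twisted compositions c ∘_i^d c' := c ∘_i ρ_i(d)(c') are equivariant in the appropriate sense, and (ii) for c' ∈ C(l) and i ≤ j < i+l the compatibility ρ_i(d)(c') ∘_{j−i+1} ρ_j(d ∘_i d')(c'') = ρ_i(d)(c' ∘_{j−i+1} ρ_{j−i+1}(d')(c'')) holds, together with ρ being an action compatible with the D-compositions in the disjoint-slot cases. Then the semi-direct product C ⋊ D, with spaces C(n) × D(n), diagonal symmetric group action, and compositions (c,d) ∘_i (c',d') = (c ∘_i^d c', d ∘_i d'), is an operad. -/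
import Mathlib


/-- The block substitution `σ ∘_i τ` on indices: the function on `Fin (n+m+1)`
induced by substituting the block `(m+1)`-tuple, internally permuted by `τ`,
into the `i`-th slot of `σ` (all indices 0-based, arities `n+1` and `m+1`). -/
def blockFun {n m : ℕ} (σ : Fin (n + 1) → Fin (n + 1)) (i : Fin (n + 1))
    (τ : Fin (m + 1) → Fin (m + 1)) (p : Fin (n + m + 1)) : Fin (n + m + 1) :=
  if h1 : (p : ℕ) < (i : ℕ) then
    if (σ ⟨(p : ℕ), by have := i.isLt; omega⟩ : ℕ) < (σ i : ℕ) then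
      ⟨(σ ⟨(p : ℕ), by have := i.isLt; omega⟩ : ℕ), by
        have := (σ ⟨(p : ℕ), by have := i.isLt; omega⟩).isLt; omega⟩
    else
      ⟨(σ ⟨(p : ℕ), by have := i.isLt; omega⟩ : ℕ) + m, by
        have := (σ ⟨(p : ℕ), by have := i.isLt; omega⟩).isLt; omega⟩
  else if h2 : (p : ℕ) < (i : ℕ) + m + 1 then
    ⟨(σ i : ℕ) + (τ ⟨(p : ℕ) - (i : ℕ), by omega⟩ : ℕ), by
      have := (σ i).isLt; have := (τ ⟨(p : ℕ) - (i : ℕ), by omega⟩).isLt; omega⟩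
  else
    if (σ ⟨(p : ℕ) - m, by have := p.isLt; omega⟩ : ℕ) < (σ i : ℕ) then
      ⟨(σ ⟨(p : ℕ) - m, by have := p.isLt; omega⟩ : ℕ), by
        have := (σ ⟨(p : ℕ) - m, by have := p.isLt; omega⟩).isLt; omega⟩
    else
      ⟨(σ ⟨(p : ℕ) - m, by have := p.isLt; omega⟩ : ℕ) + m, by
        have := (σ ⟨(p : ℕ) - m, by have := p.isLt; omega⟩).isLt; omega⟩

universe u

/-- The data of a collection of `S_n`-sets with partial compositions (an operad
datum): objects `O(n)` for `n ≥ 1`, compositions `∘_i` and symmetric group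
actions. -/
structure OperadData (O : ℕ → Type u) where
  comp : ∀ {n m : ℕ}, O (n + 1) → Fin (n + 1) → O (m + 1) → O (n + m + 1)
  act : ∀ {n : ℕ}, Equiv.Perm (Fin (n + 1)) → O (n + 1) → O (n + 1)

/-- The operad axioms: the three associativity relations and equivariance with
respect to block permutations (a permutation `π` of `Fin (n+m+1)` acting on
indices as the block substitution `blockFun σ i τ`). -/
def OperadData.IsOperad {O : ℕ → Type u} (𝒪 : OperadData O) : Prop :=
  (∀ (k l m : ℕ) (a : O (k + 1)) (b : O (l + 1)) (c : O (m + 1)) (i j : Fin (k + 1))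
      (hj : (j : ℕ) < (i : ℕ)),
      𝒪.comp (𝒪.comp a i b) ⟨(j : ℕ), by have := j.isLt; omega⟩ c =
        cast (congrArg O (by omega : k + m + l + 1 = k + l + m + 1))
          (𝒪.comp (𝒪.comp a j c) ⟨(i : ℕ) + m, by have := i.isLt; omega⟩ b)) ∧
  (∀ (k l m : ℕ) (a : O (k + 1)) (b : O (l + 1)) (c : O (m + 1)) (i : Fin (k + 1))
      (j : Fin (k + l + 1)) (h1 : (i : ℕ) ≤ (j : ℕ)) (h2 : (j : ℕ) ≤ (i : ℕ) + l),
      𝒪.comp (𝒪.comp a i b) j c =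
        cast (congrArg O (by omega : k + (l + m) + 1 = k + l + m + 1))
          (𝒪.comp a i (𝒪.comp b ⟨(j : ℕ) - (i : ℕ), by omega⟩ c))) ∧
  (∀ (k l m : ℕ) (a : O (k + 1)) (b : O (l + 1)) (c : O (m + 1)) (i : Fin (k + 1))
      (j : Fin (k + l + 1)) (h3 : (i : ℕ) + l + 1 ≤ (j : ℕ)),
      𝒪.comp (𝒪.comp a i b) j c =
        cast (congrArg O (by omega : k + m + l + 1 = k + l + m + 1))
          (𝒪.comp (𝒪.comp a ⟨(j : ℕ) - l, by have := j.isLt; omega⟩ c)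
            ⟨(i : ℕ), by have := i.isLt; omega⟩ b)) ∧
  (∀ (n m : ℕ) (σ : Equiv.Perm (Fin (n + 1))) (τ : Equiv.Perm (Fin (m + 1)))
      (π : Equiv.Perm (Fin (n + m + 1))) (a : O (n + 1)) (b : O (m + 1)) (i : Fin (n + 1)),
      ⇑π = blockFun ⇑σ i ⇑τ →
      𝒪.comp (𝒪.act σ a) i (𝒪.act τ b) = 𝒪.act π (𝒪.comp a (σ i) b))


private theorem castPair {C D : ℕ → Type u} {n m : ℕ} (h : n = m) (p : C n × D n) :
    cast (congrArg (fun n => C n × D n) h) p =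
      (cast (congrArg C h) p.1, cast (congrArg D h) p.2) := by
  subst h; rfl

/-- Semi-direct product of operads: if the operad `D` acts on the operad `C`
via maps `ρ_i : D(n) × C(m) → C(m)` such that the twisted compositions
`c ∘_i^d c' := c ∘_i ρ_i(d)(c')` are equivariant, and the compatibility
conditions with the `D`-compositions hold (in the nested-slot case and in the
disjoint-slot cases), then the semi-direct product `C ⋊ D`, with spaces
`C(n) × D(n)`, diagonal symmetric group action and compositions
`(c,d) ∘_i (c',d') = (c ∘_i^d c', d ∘_i d')`, is an operad. -/
theorem stmt13 {C D : ℕ → Type u} (𝒞 : OperadData C) (𝒟 : OperadData D)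
    (hC : 𝒞.IsOperad) (hD : 𝒟.IsOperad)
    (ρ : ∀ {n m : ℕ}, D (n + 1) → Fin (n + 1) → C (m + 1) → C (m + 1))
    -- (i) equivariance of the twisted compositions
    (hEquiv : ∀ (n m : ℕ) (σ : Equiv.Perm (Fin (n + 1))) (τ : Equiv.Perm (Fin (m + 1)))
      (π : Equiv.Perm (Fin (n + m + 1))) (c : C (n + 1)) (d : D (n + 1)) (c' : C (m + 1))
      (i : Fin (n + 1)), ⇑π = blockFun ⇑σ i ⇑τ →
      𝒞.comp (𝒞.act σ c) i (ρ (𝒟.act σ d) i (𝒞.act τ c')) =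
        𝒞.act π (𝒞.comp c (σ i) (ρ d (σ i) c')))
    -- (ii) compatibility of the action with the D-compositions, nested slots:
    -- ρ_i(d)(c') ∘_{j−i} ρ_j(d ∘_i d')(c'') = ρ_i(d)(c' ∘_{j−i} ρ_{j−i}(d')(c''))
    (hNested : ∀ (k l m : ℕ) (d : D (k + 1)) (d' : D (l + 1)) (c' : C (l + 1))
      (c'' : C (m + 1)) (i : Fin (k + 1)) (j : Fin (k + l + 1))
      (h1 : (i : ℕ) ≤ (j : ℕ)) (h2 : (j : ℕ) ≤ (i : ℕ) + l),
      𝒞.comp (ρ d i c') ⟨(j : ℕ) - (i : ℕ), by omega⟩ (ρ (𝒟.comp d i d') j c'') =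
        ρ d i (𝒞.comp c' ⟨(j : ℕ) - (i : ℕ), by omega⟩
          (ρ d' ⟨(j : ℕ) - (i : ℕ), by omega⟩ c'')))
    -- compatibility in the disjoint-slot cases: ρ only depends on the matching slot
    (hDisjL : ∀ (k l m : ℕ) (d : D (k + 1)) (d' : D (l + 1)) (x : C (m + 1))
      (i j : Fin (k + 1)) (hj : (j : ℕ) < (i : ℕ)),
      ρ (𝒟.comp d i d') ⟨(j : ℕ), by have := j.isLt; omega⟩ x = ρ d j x)
    (hDisjR : ∀ (k l m : ℕ) (d : D (k + 1)) (d'' : D (m + 1)) (x : C (l + 1))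
      (i j : Fin (k + 1)) (hj : (j : ℕ) < (i : ℕ)),
      ρ (𝒟.comp d j d'') ⟨(i : ℕ) + m, by have := i.isLt; omega⟩ x = ρ d i x) :
    OperadData.IsOperad (O := fun n => C n × D n)
      { comp := fun a i b => (𝒞.comp a.1 i (ρ a.2 i b.1), 𝒟.comp a.2 i b.2)
        act := fun σ a => (𝒞.act σ a.1, 𝒟.act σ a.2) } := by
  obtain ⟨hC1, hC2, hC3, hC4⟩ := hC
  obtain ⟨hD1, hD2, hD3, hD4⟩ := hD
  refine ⟨?_, ?_, ?_, ?_⟩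
  · intro k l m a b c i j hj
    rw [castPair (show k + m + l + 1 = k + l + m + 1 by omega)]
    dsimp only
    refine Prod.ext ?_ ?_
    · rw [hDisjL k l m a.2 b.2 c.1 i j hj, hDisjR k l m a.2 c.2 b.1 i j hj,
        hC1 k l m a.1 (ρ a.2 i b.1) (ρ a.2 j c.1) i j hj]
    · exact hD1 k l m a.2 b.2 c.2 i j hj
  · intro k l m a b c i j h1 h2
    rw [castPair (show k + (l + m) + 1 = k + l + m + 1 by omega)]
    dsimp only
    refine Prod.ext ?_ ?_
    · rw [hC2 k l m a.1 (ρ a.2 i b.1) (ρ (𝒟.comp a.2 i b.2) j c.1) i j h1 h2,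
        hNested k l m a.2 b.2 b.1 c.1 i j h1 h2]
    · exact hD2 k l m a.2 b.2 c.2 i j h1 h2
  · intro k l m a b c i j h3
    rw [castPair (show k + m + l + 1 = k + l + m + 1 by omega)]
    dsimp only
    refine Prod.ext ?_ ?_
    · show 𝒞.comp (𝒞.comp a.1 i (ρ a.2 i b.1)) j (ρ (𝒟.comp a.2 i b.2) j c.1) =
        cast (congrArg C (show k + m + l + 1 = k + l + m + 1 by omega))
          (𝒞.comp (𝒞.comp a.1 ⟨(j : ℕ) - l, by have := j.isLt; omega⟩
              (ρ a.2 ⟨(j : ℕ) - l, by have := j.isLt; omega⟩ c.1))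
            ⟨(i : ℕ), by have := i.isLt; omega⟩
            (ρ (𝒟.comp a.2 ⟨(j : ℕ) - l, by have := j.isLt; omega⟩ c.2)
              ⟨(i : ℕ), by have := i.isLt; omega⟩ b.1))
      have hjl : (j : ℕ) - l < k + 1 := by have := j.isLt; omega
      have hji : (i : ℕ) < ((⟨(j : ℕ) - l, hjl⟩ : Fin (k + 1)) : ℕ) := by
        show (i : ℕ) < (j : ℕ) - l; omega
      have key : ρ (𝒟.comp a.2 i b.2) j c.1 = ρ a.2 ⟨(j : ℕ) - l, hjl⟩ c.1 := by
        have hje : j = (⟨((⟨(j : ℕ) - l, hjl⟩ : Fin (k + 1)) : ℕ) + l, by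
            show (j : ℕ) - l + l < k + l + 1; have := j.isLt; omega⟩ : Fin (k + l + 1)) :=
          Fin.ext (by show (j : ℕ) = (j : ℕ) - l + l; omega)
        conv_lhs => rw [hje]
        exact hDisjR k m l a.2 b.2 c.1 ⟨(j : ℕ) - l, hjl⟩ i hji
      exact (congrArg (fun x => 𝒞.comp (𝒞.comp a.1 i (ρ a.2 i b.1)) j x) key).trans
        ((hC3 k l m a.1 (ρ a.2 i b.1) (ρ a.2 ⟨(j : ℕ) - l, hjl⟩ c.1) i j h3).trans
          (congrArg (fun x => cast (congrArg C (show k + m + l + 1 = k + l + m + 1 by omega))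
              (𝒞.comp (𝒞.comp a.1 ⟨(j : ℕ) - l, hjl⟩ (ρ a.2 ⟨(j : ℕ) - l, hjl⟩ c.1))
                ⟨(i : ℕ), by have := i.isLt; omega⟩ x))
            (hDisjL k m l a.2 c.2 b.1 ⟨(j : ℕ) - l, hjl⟩ i hji).symm))
    · exact hD3 k l m a.2 b.2 c.2 i j h3
  · intro n m σ τ π a b i hπ
    refine Prod.ext ?_ ?_
    · exact hEquiv n m σ τ π a.1 a.2 b.1 i hπ
    · exact hD4 n m σ τ π a.2 b.2 i hπ
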